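/- arXiv:2202.10789 — 3 statements merged into one kernel-verified Lean document; each statement's English description precedes it below -/
import Mathlib

section
/- If σ and π are permutations of [n] each admitting a decomposition into at most m strictly decreasing subsequences, then σ and π are 2m-similar. -/
open Finset

/-- The subsequence of `σ` on index set `A` is order-isomorphic to the
subsequence of `π` on index set `B` (indices taken in increasing order). -/
def OrdIsoOn {n : ℕ} (σ π : Fin n → ℕ) (A B : Finset (Fin n)) : Prop :=
  A.card = B.card ∧
    ∀ (i j : ℕ) (hiA : i < A.card) (hjA : j < A.card) (hiB : i < B.card) (hjB : j < B.card),
      (σ (A.orderIsoOfFin rfl ⟨i, hiA⟩) < σ (A.orderIsoOfFin rfl ⟨j, hjA⟩) ↔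
        π (B.orderIsoOfFin rfl ⟨i, hiB⟩) < π (B.orderIsoOfFin rfl ⟨j, hjB⟩))

/-- `A` and `B` witness an `ℓ`-similarity decomposition of `σ` and `π`. -/
def IsSimilarDecomp {n ℓ : ℕ} (σ π : Equiv.Perm (Fin n)) (A B : Fin ℓ → Finset (Fin n)) : Prop :=
  (∀ i j, i ≠ j → Disjoint (A i) (A j)) ∧ Finset.univ.biUnion A = Finset.univ ∧
  (∀ i j, i ≠ j → Disjoint (B i) (B j)) ∧ Finset.univ.biUnion B = Finset.univ ∧
  ∀ i, OrdIsoOn (fun x => (σ x : ℕ)) (fun x => (π x : ℕ)) (A i) (B i)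

/-- `σ` and `π` are `ℓ`-similar. -/
def PermSimilar (n ℓ : ℕ) (σ π : Equiv.Perm (Fin n)) : Prop :=
  ∃ A B : Fin ℓ → Finset (Fin n), IsSimilarDecomp σ π A B

/-!
Write the positions of a permutation so that the parts of its decreasing cover become consecutive
blocks: after this re-indexing the part of position `d` is a monotone function `a d`, and for the
other permutation it is a monotone `b d`. Labelling position `d` by `a d + b d < 2m` refines both
block structures, because along a chain of the product order `Fin m × Fin m` the coordinate sum is
injective. Each label class of positions is then contained in a single part on either side, so it
pulls back to decreasing subsequences of `σ` and of `π` of the same length.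
-/

open Function

theorem ordIsoOn_of_strictAntiOn {n : ℕ} {σ π : Fin n → ℕ} {S T : Finset (Fin n)}
    (hcard : S.card = T.card) (hσ : StrictAntiOn σ S) (hπ : StrictAntiOn π T) :
    OrdIsoOn σ π S T := by
  have lt_iff : ∀ {ρ : Fin n → ℕ} {s : Finset (Fin n)}, StrictAntiOn ρ s →
      ∀ (i j : ℕ) (hi : i < s.card) (hj : j < s.card),
        ρ (s.orderIsoOfFin rfl ⟨i, hi⟩) < ρ (s.orderIsoOfFin rfl ⟨j, hj⟩) ↔ j < i := by
    intro ρ s hρ i j hi hj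
    have hanti : StrictAnti fun k => ρ (s.orderIsoOfFin rfl k) := fun k l hkl =>
      hρ (s.orderIsoOfFin rfl k).2 (s.orderIsoOfFin rfl l).2
        ((s.orderIsoOfFin rfl).strictMono hkl)
    exact hanti.lt_iff_gt
  exact ⟨hcard, fun i j hiS hjS hiT hjT => by rw [lt_iff hσ, lt_iff hπ]⟩

theorem permSimilar_of_labels {n ℓ : ℕ} {σ π : Equiv.Perm (Fin n)} (f g : Fin n → Fin ℓ)
    (hcard : ∀ k, #{x | f x = k} = #{x | g x = k})
    (hf : ∀ x y, f x = f y → x < y → σ y < σ x)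
    (hg : ∀ x y, g x = g y → x < y → π y < π x) :
    PermSimilar n ℓ σ π := by
  have fiber_disjoint : ∀ h : Fin n → Fin ℓ, ∀ i j, i ≠ j →
      Disjoint ({x | h x = i} : Finset (Fin n)) ({x | h x = j} : Finset (Fin n)) :=
    fun h i j hij => disjoint_filter.mpr fun x _ (hi : h x = i) (hj : h x = j) => hij (hi ▸ hj)
  have fiber_cover : ∀ h : Fin n → Fin ℓ, univ.biUnion (fun k => ({x | h x = k} : Finset _)) = univ :=
    fun h => eq_univ_of_forall fun x => mem_biUnion.mpr ⟨h x, mem_univ _, by simp⟩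
  have fiber_strictAntiOn : ∀ (h : Fin n → Fin ℓ) (ρ : Fin n → ℕ),
      (∀ x y, h x = h y → x < y → ρ y < ρ x) → ∀ k, StrictAntiOn ρ ({x | h x = k} : Finset _) :=
    fun h ρ hρ k x hx y hy hxy =>
      hρ x y ((mem_filter.mp hx).2.trans (mem_filter.mp hy).2.symm) hxy
  exact ⟨fun k => {x | f x = k}, fun k => {x | g x = k}, fiber_disjoint f, fiber_cover f,
    fiber_disjoint g, fiber_cover g, fun k => ordIsoOn_of_strictAntiOn (hcard k)
      (fiber_strictAntiOn f _ hf k) (fiber_strictAntiOn g _ hg k)⟩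

theorem card_filter_comp_equiv {α β γ : Type*} [Fintype α] [Fintype β] [DecidableEq γ]
    (e : α ≃ β) (f : β → γ) (k : γ) : #{x | f (e x) = k} = #{y | f y = k} :=
  card_equiv e fun x => by simp

theorem exists_equiv_fin_lt_iff_of_injective {α β : Type*} [Fintype α] [LinearOrder β] {n : ℕ}
    (hn : Fintype.card α = n) {f : α → β} (hf : Injective f) :
    ∃ e : α ≃ Fin n, ∀ x y, e x < e y ↔ f x < f y := by
  classical
  let r : Fin n ≃o Set.range f :=
    Fintype.orderIsoFinOfCardEq _ ((Set.card_range_of_injective hf).trans hn)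
  refine ⟨(Equiv.ofInjective f hf).trans r.symm.toEquiv, fun x y => ?_⟩
  simp only [Equiv.trans_apply, RelIso.coe_fn_toEquiv, r.symm.lt_iff_lt]
  rfl

theorem exists_equiv_fin_monotone_part {α ι : Type*} [Fintype α] [LinearOrder α] [LinearOrder ι]
    {n : ℕ} (hn : Fintype.card α = n) (p : α → ι) :
    ∃ e : α ≃ Fin n, Monotone (p ∘ e.symm) ∧ ∀ x y, p x = p y → x < y → e x < e y := by
  obtain ⟨e, he⟩ := exists_equiv_fin_lt_iff_of_injective hn
    (f := fun x => toLex (p x, x)) fun x y hxy => congrArg (fun z => (ofLex z).2) hxy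
  refine ⟨e, fun d d' hdd' => ?_, fun x y hp hxy => (he x y).mpr (Prod.Lex.lt_iff.mpr
    (Or.inr ⟨hp, hxy⟩))⟩
  by_contra hlt
  have hlex := (he (e.symm d') (e.symm d)).mpr (Prod.Lex.lt_iff.mpr (Or.inl (not_le.mp hlt)))
  simp only [Equiv.apply_symm_apply] at hlex
  exact hlex.not_ge hdd'

theorem exists_equiv_monotone_part_of_decreasing_cover {β : Type*} [Preorder β] {n m : ℕ}
    {ρ : Fin n → β}
    {A : Fin m → Finset (Fin n)} (hcov : univ.biUnion A = univ)
    (hdec : ∀ i, ∀ p ∈ A i, ∀ q ∈ A i, p < q → ρ q < ρ p) :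
    ∃ (e : Fin n ≃ Fin n) (a : Fin n → Fin m), Monotone a ∧
      ∀ x y, a (e x) = a (e y) → x < y → ρ y < ρ x := by
  choose p hp using fun x => mem_biUnion.mp (hcov ▸ mem_univ x)
  obtain ⟨e, hmono, -⟩ := exists_equiv_fin_monotone_part (Fintype.card_fin n) p
  refine ⟨e, p ∘ e.symm, hmono, fun x y hxy => ?_⟩
  simp only [comp_apply, Equiv.symm_apply_apply] at hxy
  exact hdec (p x) x (hp x).2 y (hxy ▸ (hp y).2)

theorem Monotone.eq_and_eq_of_add_eq_add {α : Type*} [LinearOrder α] {a b : α → ℕ}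
    (ha : Monotone a) (hb : Monotone b) {d d' : α} (h : a d + b d = a d' + b d') :
    a d = a d' ∧ b d = b d' := by
  rcases le_total d d' with hdd' | hdd' <;>
  · have := ha hdd'; have := hb hdd'; omega

theorem similar_of_decreasing_decomps_general (n m : ℕ) (σ π : Equiv.Perm (Fin n))
    (A B : Fin m → Finset (Fin n))
    (hAcov : Finset.univ.biUnion A = Finset.univ)
    (hBcov : Finset.univ.biUnion B = Finset.univ)
    (hAdec : ∀ i, ∀ p ∈ A i, ∀ q ∈ A i, p < q → σ q < σ p)
    (hBdec : ∀ i, ∀ p ∈ B i, ∀ q ∈ B i, p < q → π q < π p) :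
    PermSimilar n (2 * m) σ π := by
  obtain ⟨eA, a, ha, hA⟩ := exists_equiv_monotone_part_of_decreasing_cover hAcov hAdec
  obtain ⟨eB, b, hb, hB⟩ := exists_equiv_monotone_part_of_decreasing_cover hBcov hBdec
  let c : Fin n → Fin (2 * m) := fun d => ⟨a d + b d, by omega⟩
  have hc : ∀ d d', c d = c d' → a d = a d' ∧ b d = b d' := fun d d' h => by
    simpa only [comp_apply, Fin.val_inj] using
      (Fin.val_strictMono.monotone.comp ha).eq_and_eq_of_add_eq_add
        (Fin.val_strictMono.monotone.comp hb) (Fin.ext_iff.mp h)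
  refine permSimilar_of_labels (c ∘ eA) (c ∘ eB) (fun k => ?_)
    (fun x y hxy => hA x y (hc _ _ hxy).1) (fun x y hxy => hB x y (hc _ _ hxy).2)
  simp only [comp_apply, card_filter_comp_equiv]

/-- If `σ` and `π` each admit a decomposition into at most `m` strictly decreasing
subsequences, then they are `2m`-similar. -/
theorem similar_of_decreasing_decomps (n m : ℕ) (σ π : Equiv.Perm (Fin n))
    (A B : Fin m → Finset (Fin n))
    (hAdisj : ∀ i j, i ≠ j → Disjoint (A i) (A j)) (hAcov : Finset.univ.biUnion A = Finset.univ)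
    (hBdisj : ∀ i j, i ≠ j → Disjoint (B i) (B j)) (hBcov : Finset.univ.biUnion B = Finset.univ)
    (hAdec : ∀ i, ∀ p ∈ A i, ∀ q ∈ A i, p < q → σ q < σ p)
    (hBdec : ∀ i, ∀ p ∈ B i, ∀ q ∈ B i, p < q → π q < π p) :
    PermSimilar n (2 * m) σ π :=
  similar_of_decreasing_decomps_general n m σ π A B hAcov hBcov hAdec hBdec
end

section
/- Every finite bipartite multigraph with maximum degree Δ admits a proper edge colouring using at most Δ colours; equivalently, its edge multiset can be partitioned into at most Δ matchings. -/
/-!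
Induct on the edges. When the edge `ab` is added to a colouring of the remaining edges by `Δ`
matchings, the degree bounds leave a colour `i` missing at `a` and a colour `j` missing at `b`.
If `i ≠ j`, exchanging `i` and `j` along the `i`/`j`-alternating path that starts at `b` frees
colour `i` at `b` and keeps it free at `a`: every left vertex of the path is entered along an
edge of colour `i`, so the path never reaches `a`. Then `ab` gets colour `i`.
-/

open Multiset Function

section

variable {α β : Type*}

def IsMatching (M : Multiset (α × β)) : Prop :=
  (M.map Prod.fst).Nodup ∧ (M.map Prod.snd).Nodup

@[simp]
lemma isMatching_zero : IsMatching (0 : Multiset (α × β)) := by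
  simp [IsMatching]

lemma isMatching_cons {e : α × β} {M : Multiset (α × β)} :
    IsMatching (e ::ₘ M) ↔ e.1 ∉ M.map Prod.fst ∧ e.2 ∉ M.map Prod.snd ∧ IsMatching M := by
  simp only [IsMatching, map_cons, nodup_cons]
  tauto

/-- On the `P`/`Q`-alternating path from `b`, the edges `(x, b) ∈ P` and `(x, y) ∈ Q` exchange
colours and the rest of the path, which starts at `y`, is handled by induction. -/
theorem IsMatching.exists_kempe_swap {P Q : Multiset (α × β)}
    (hP : IsMatching P) (hQ : IsMatching Q) {a : α} {b : β}
    (ha : a ∉ P.map Prod.fst) (hb : b ∉ Q.map Prod.snd) :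
    ∃ P' Q', P' + Q' = P + Q ∧ IsMatching P' ∧ IsMatching Q' ∧
      a ∉ P'.map Prod.fst ∧ b ∉ P'.map Prod.snd := by
  induction P using Multiset.strongInductionOn generalizing Q b with
  | _ P ih =>
  by_cases hbP : b ∉ P.map Prod.snd
  · exact ⟨P, Q, rfl, hP, hQ, ha, hbP⟩
  obtain ⟨x, hxbP⟩ : ∃ x, (x, b) ∈ P := by simpa using hbP
  obtain ⟨P₀, rfl⟩ := exists_cons_of_mem hxbP
  obtain ⟨hxP₀, hbP₀, hP₀⟩ := isMatching_cons.1 hP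
  have haP₀ : a ∉ P₀.map Prod.fst := fun h => ha (mem_of_le (map_le_map (le_cons_self _ _)) h)
  by_cases hxQ : x ∉ Q.map Prod.fst
  · exact ⟨P₀, (x, b) ::ₘ Q, by simp, hP₀, isMatching_cons.2 ⟨hxQ, hb, hQ⟩, haP₀, hbP₀⟩
  obtain ⟨y, hxyQ⟩ : ∃ y, (x, y) ∈ Q := by simpa using hxQ
  obtain ⟨Q₀, rfl⟩ := exists_cons_of_mem hxyQ
  obtain ⟨hxQ₀, hyQ₀, hQ₀⟩ := isMatching_cons.1 hQ
  have hbQ₀ : b ∉ Q₀.map Prod.snd := fun h => hb (mem_of_le (map_le_map (le_cons_self _ _)) h)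
  obtain ⟨P₁, Q₁, hsum, hP₁, hQ₁, haP₁, hyP₁⟩ := ih P₀ (lt_cons_self _ _) hP₀ hQ₀ haP₀ hyQ₀
  have hxPQ : x ∉ P₁.map Prod.fst ∧ x ∉ Q₁.map Prod.fst := by
    rw [← not_or, ← mem_add, ← map_add, hsum, map_add, mem_add]
    exact not_or.2 ⟨hxP₀, hxQ₀⟩
  have hbPQ : b ∉ P₁.map Prod.snd ∧ b ∉ Q₁.map Prod.snd := by
    rw [← not_or, ← mem_add, ← map_add, hsum, map_add, mem_add]
    exact not_or.2 ⟨hbP₀, hbQ₀⟩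
  have hxa : x ≠ a := by rintro rfl; simp at ha
  have hyb : y ≠ b := by rintro rfl; simp at hb
  refine ⟨(x, y) ::ₘ P₁, (x, b) ::ₘ Q₁, ?_, isMatching_cons.2 ⟨?_, hyP₁, hP₁⟩,
    isMatching_cons.2 ⟨?_, ?_, hQ₁⟩, ?_, ?_⟩
  · rw [cons_add, add_cons, hsum, cons_add, add_cons, cons_swap]
  · exact hxPQ.1
  · exact hxPQ.2
  · exact hbPQ.2
  · simp [hxa.symm, haP₁]
  · simp [hyb.symm, hbPQ.1]

lemma Fintype.sum_update_add {ι M : Type*} [Fintype ι] [DecidableEq ι] [AddCommMonoid M]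
    (f : ι → M) (i : ι) (x : M) : ∑ k, update f i x k + f i = x + ∑ k, f k := by
  rw [← Finset.add_sum_erase _ _ (Finset.mem_univ i),
    ← Finset.add_sum_erase _ f (Finset.mem_univ i), Finset.sum_update_of_notMem (Finset.notMem_erase i _), update_self, add_right_comm, add_assoc]

lemma Multiset.exists_forall_not_of_countP_sum_lt {ι γ : Type*} [Fintype ι] (M : ι → Multiset γ)
    {p : γ → Prop} [DecidablePred p] (h : (∑ i, M i).countP p < Fintype.card ι) :
    ∃ i, ∀ e ∈ M i, ¬p e := by
  rw [← coe_countPAddMonoidHom, map_sum, Fintype.card_eq_sum_ones] at h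
  obtain ⟨i, -, hi⟩ := Finset.exists_lt_of_sum_lt h
  exact ⟨i, countP_eq_zero.1 (Nat.lt_one_iff.1 hi)⟩

lemma exists_matchings_sum_cons {ι : Type*} [Fintype ι] [DecidableEq ι]
    {M : ι → Multiset (α × β)} (hM : ∀ k, IsMatching (M k)) {a : α} {b : β}
    {i j : ι} (hi : a ∉ (M i).map Prod.fst) (hj : b ∉ (M j).map Prod.snd) :
    ∃ M' : ι → Multiset (α × β), ∑ k, M' k = (a, b) ::ₘ ∑ k, M k ∧ ∀ k, IsMatching (M' k) := by
  obtain rfl | hij := eq_or_ne i j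
  · refine ⟨update M i ((a, b) ::ₘ M i), add_right_cancel (b := M i) ?_, fun k => ?_⟩
    · rw [Fintype.sum_update_add, cons_add, cons_add, add_comm]
    · rcases eq_or_ne k i with rfl | hk
      · simpa using isMatching_cons.2 ⟨hi, hj, hM k⟩
      · simpa [hk] using hM k
  · obtain ⟨P, Q, hPQ, hP, hQ, haP, hbP⟩ := (hM i).exists_kempe_swap (hM j) hi hj
    refine ⟨update (update M j Q) i ((a, b) ::ₘ P), add_right_cancel (b := M i + M j) ?_,
      fun k => ?_⟩
    · nth_rw 1 [← update_of_ne hij Q M]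
      rw [← add_assoc, Fintype.sum_update_add, add_assoc, Fintype.sum_update_add, ← hPQ,
        cons_add, cons_add, add_comm _ (P + Q), add_assoc]
    · rcases eq_or_ne k i with rfl | hki
      · simpa using isMatching_cons.2 ⟨haP, hbP, hP⟩
      rcases eq_or_ne k j with rfl | hkj
      · simpa [hki] using hQ
      · simpa [hki, hkj] using hM k

theorem exists_matchings_sum_eq [DecidableEq α] [DecidableEq β] {ι : Type*} [Fintype ι]
    [DecidableEq ι] (E : Multiset (α × β))
    (hL : ∀ a, E.countP (·.1 = a) ≤ Fintype.card ι)
    (hR : ∀ b, E.countP (·.2 = b) ≤ Fintype.card ι) :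
    ∃ M : ι → Multiset (α × β), ∑ i, M i = E ∧ ∀ i, IsMatching (M i) := by
  induction E using Multiset.induction_on with
  | empty => exact ⟨0, by simp, fun _ => isMatching_zero⟩
  | cons e E ih =>
    obtain ⟨a, b⟩ := e
    obtain ⟨M, rfl, hM⟩ := ih (fun a' => (countP_le_of_le _ (le_cons_self _ _)).trans (hL a'))
      (fun b' => (countP_le_of_le _ (le_cons_self _ _)).trans (hR b'))
    obtain ⟨i, hi⟩ := exists_forall_not_of_countP_sum_lt M (p := (·.1 = a))
      (by simpa [countP_cons_of_pos] using hL a)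
    obtain ⟨j, hj⟩ := exists_forall_not_of_countP_sum_lt M (p := (·.2 = b))
      (by simpa [countP_cons_of_pos] using hR b)
    exact exists_matchings_sum_cons hM (by simp only [mem_map, not_exists, not_and]; exact hi)
      (by simp only [mem_map, not_exists, not_and]; exact hj)

end

/-- Kőnig's edge-colouring theorem for bipartite multigraphs: the edge multiset `E`
(edges from a left vertex in `α` to a right vertex in `β`, with multiplicity) of a
bipartite multigraph with maximum degree at most `Δ` can be partitioned into at
most `Δ` matchings. -/
theorem bipartite_multigraph_edge_colouring {α β : Type*} [DecidableEq α] [DecidableEq β]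
    (E : Multiset (α × β)) (Δ : ℕ)
    (hL : ∀ a : α, (E.filter (fun e => e.1 = a)).card ≤ Δ)
    (hR : ∀ b : β, (E.filter (fun e => e.2 = b)).card ≤ Δ) :
    ∃ M : Fin Δ → Multiset (α × β), (∑ i, M i) = E ∧
      ∀ i, ((M i).map Prod.fst).Nodup ∧ ((M i).map Prod.snd).Nodup :=
  exists_matchings_sum_eq E (by simpa [countP_eq_card_filter] using hL)
    (by simpa [countP_eq_card_filter] using hR)
end

section
/- Let σ and π be permutations of [n] determined respectively by red points r_1,...,r_n and blue points b_1,...,b_n in [0,1]^2 in general position (no two points of the same colour share an x- or y-coordinate), with r matched to b via a bijection. Partition [0,1]^2 into an M × M grid. Suppose I ⊆ [n] is a set of indices such that: (a) the red points {r_i : i ∈ I} lie in pairwise distinct grid rows and pairwise distinct grid columns; (b) all matched pairs (r_i, b_i), i ∈ I, have the same grid offset label (c_1, c_2); and (c) the blue points {b_i : i ∈ I} also lie in pairwise distinct grid rows and columns. Then the subsequence of σ indexed by the positions of {r_i : i ∈ I} is order-isomorphic to the subsequence of π indexed by the positions of {b_i : i ∈ I}. -/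
/-- The grid row index (in an `M × M` grid on `[0,1]²`) of a point `p`. -/
noncomputable def gridRow (M : ℕ) (p : ℝ × ℝ) : ℤ := ⌊(p.2 : ℝ) * M⌋

/-- The grid column index of a point `p`. -/
noncomputable def gridCol (M : ℕ) (p : ℝ × ℝ) : ℤ := ⌊(p.1 : ℝ) * M⌋

lemma floor_lt_iff_aux (M : ℕ) (hM : 0 < M) (x y : ℝ) (h : ⌊x * M⌋ ≠ ⌊y * M⌋) :
    x < y ↔ ⌊x * M⌋ < ⌊y * M⌋ := by
  constructor
  · intro hxy
    refine lt_of_le_of_ne ?_ h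
    exact Int.floor_le_floor (by nlinarith [(Nat.cast_pos (α := ℝ)).mpr hM])
  · intro hfl
    have h1 : x * M < (⌊x * M⌋ : ℝ) + 1 := Int.lt_floor_add_one _
    have h2 : (⌊y * M⌋ : ℝ) ≤ y * M := Int.floor_le _
    have : (⌊x * M⌋ : ℝ) + 1 ≤ (⌊y * M⌋ : ℝ) := by exact_mod_cast hfl
    nlinarith [(Nat.cast_pos (α := ℝ)).mpr hM]

/-- Suppose red points `r` and blue points `b` in `[0,1]²`, in general position, determine
permutations `σ` and `π` (sort by `x`-coordinate, read ranks of `y`-coordinates), with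
`r i` matched to `b i`.  If `I` is a set of indices such that (a) the red points of `I`
occupy pairwise distinct grid rows and columns, (b) all matched pairs of `I` have the same
grid offset label `(c₁, c₂)`, and (c) the blue points of `I` also occupy pairwise distinct
grid rows and columns, then the subsequence of `σ` at the red points of `I` is
order-isomorphic to the subsequence of `π` at the blue points of `I`: the matching
preserves both the `x`-order and the `y`-order of the selected points. -/
theorem same_offset_gives_orderIso (n M : ℕ) (hM : 0 < M)
    (r b : Fin n → ℝ × ℝ)
    (hr : ∀ i, (r i).1 ∈ Set.Icc (0:ℝ) 1 ∧ (r i).2 ∈ Set.Icc (0:ℝ) 1)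
    (hb : ∀ i, (b i).1 ∈ Set.Icc (0:ℝ) 1 ∧ (b i).2 ∈ Set.Icc (0:ℝ) 1)
    (hrx : Function.Injective (fun i => (r i).1)) (hry : Function.Injective (fun i => (r i).2))
    (hbx : Function.Injective (fun i => (b i).1)) (hby : Function.Injective (fun i => (b i).2))
    (I : Finset (Fin n)) (c₁ c₂ : ℤ)
    (hrows : ∀ i ∈ I, ∀ j ∈ I, i ≠ j →
      gridRow M (r i) ≠ gridRow M (r j) ∧ gridCol M (r i) ≠ gridCol M (r j))
    (hoffset : ∀ i ∈ I, gridRow M (b i) - gridRow M (r i) = c₁ ∧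
      gridCol M (b i) - gridCol M (r i) = c₂)
    (hbrows : ∀ i ∈ I, ∀ j ∈ I, i ≠ j →
      gridRow M (b i) ≠ gridRow M (b j) ∧ gridCol M (b i) ≠ gridCol M (b j)) :
    ∀ i ∈ I, ∀ j ∈ I,
      ((r i).1 < (r j).1 ↔ (b i).1 < (b j).1) ∧ ((r i).2 < (r j).2 ↔ (b i).2 < (b j).2) := by
  intro i hi j hj
  by_cases hij : i = j
  · simp [hij]
  have hrij := hrows i hi j hj hij
  have hbij := hbrows i hi j hj hij
  have hoi := hoffset i hi
  have hoj := hoffset j hj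
  constructor
  · rw [floor_lt_iff_aux M hM _ _ hrij.2, floor_lt_iff_aux M hM _ _ hbij.2]
    show gridCol M (r i) < gridCol M (r j) ↔ gridCol M (b i) < gridCol M (b j)
    omega
  · rw [floor_lt_iff_aux M hM _ _ hrij.1, floor_lt_iff_aux M hM _ _ hbij.1]
    show gridRow M (r i) < gridRow M (r j) ↔ gridRow M (b i) < gridRow M (b j)
    omega
end
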